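/- arXiv:2401.12523 — 9 statements merged into one kernel-verified Lean document; each statement's English description precedes it below -/
import Mathlib

section
/- Let F be a field of characteristic 0 and φ ∈ F[x,y,z], with Nagata triple f = x - 2yφ - zφ², g = y + zφ, h = z. The determinant of the Jacobian matrix of (f,g,h) is a nonzero constant in F if and only if φ satisfies -2y·∂φ/∂x + z·∂φ/∂y = 0, and in that case the determinant equals 1. -/
open MvPolynomial

/-- The Jacobian determinant of the Nagata triple is a nonzero constant iff
`-2y φ_x + z φ_y = 0`, and in that case the determinant equals 1. -/
theorem nagata_jacobian_nonzero_const_iff_pde (F : Type*) [Field F] [CharZero F]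
    (φ f g h : MvPolynomial (Fin 3) F)
    (hf : f = X 0 - 2 * X 1 * φ - X 2 * φ ^ 2)
    (hg : g = X 1 + X 2 * φ)
    (hh : h = X 2) :
    ((∃ c : F, c ≠ 0 ∧
        Matrix.det (Matrix.of ![![pderiv 0 f, pderiv 1 f, pderiv 2 f],
          ![pderiv 0 g, pderiv 1 g, pderiv 2 g],
          ![pderiv 0 h, pderiv 1 h, pderiv 2 h]]) = C c) ↔
      -(2 * X 1 * pderiv 0 φ) + X 2 * pderiv 1 φ = 0) ∧
    ((∃ c : F, c ≠ 0 ∧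
        Matrix.det (Matrix.of ![![pderiv 0 f, pderiv 1 f, pderiv 2 f],
          ![pderiv 0 g, pderiv 1 g, pderiv 2 g],
          ![pderiv 0 h, pderiv 1 h, pderiv 2 h]]) = C c) →
      Matrix.det (Matrix.of ![![pderiv 0 f, pderiv 1 f, pderiv 2 f],
          ![pderiv 0 g, pderiv 1 g, pderiv 2 g],
          ![pderiv 0 h, pderiv 1 h, pderiv 2 h]]) = 1) := by
  subst hf hg hh
  set P : MvPolynomial (Fin 3) F := -(2 * X 1 * pderiv 0 φ) + X 2 * pderiv 1 φ with hP
  have hdet : Matrix.det (Matrix.of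
      ![![pderiv 0 (X 0 - 2 * X 1 * φ - X 2 * φ ^ 2),
          pderiv 1 (X 0 - 2 * X 1 * φ - X 2 * φ ^ 2),
          pderiv 2 (X 0 - 2 * X 1 * φ - X 2 * φ ^ 2)],
        ![pderiv 0 (X 1 + X 2 * φ), pderiv 1 (X 1 + X 2 * φ), pderiv 2 (X 1 + X 2 * φ)],
        ![pderiv 0 (X 2 : MvPolynomial (Fin 3) F), pderiv 1 (X 2 : MvPolynomial (Fin 3) F),
          pderiv 2 (X 2 : MvPolynomial (Fin 3) F)]]) = 1 + P := by
    have h2 : ∀ i : Fin 3, pderiv i (2 : MvPolynomial (Fin 3) F) = 0 := fun i => by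
      simpa using (pderiv i).map_natCast (A := MvPolynomial (Fin 3) F) 2
    simp only [hP]
    simp [Matrix.det_fin_three, pderiv_X, h2]
    ring
  rw [hdet]
  have hcc : constantCoeff P = 0 := by
    simp [hP]
  have key : (∃ c : F, c ≠ 0 ∧ 1 + P = C c) ↔ P = 0 := by
    constructor
    · rintro ⟨c, hc, hcP⟩
      have hc1 : c = 1 := by
        have := congrArg constantCoeff hcP
        simpa [hcc] using this.symm
      subst hc1
      have : P = C 1 - 1 := by rw [← hcP]; ring
      simpa using this
    · intro hP0
      exact ⟨1, one_ne_zero, by simp [hP0]⟩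
  refine ⟨key, fun hc => ?_⟩
  have := key.mp hc
  simp [this]
end

section
/- Let F be a field of characteristic 0, p ∈ F[t₁,t₂], and set φ = p(xz + y², z) ∈ F[x,y,z]. Then the F-algebra endomorphism of F[x,y,z] determined by x ↦ x - 2yφ - zφ², y ↦ y + zφ, z ↦ z is an automorphism, whose inverse sends x ↦ x + 2yφ - zφ², y ↦ y - zφ, z ↦ z. -/
open MvPolynomial

/-- For φ = p(xz+y², z), the Nagata endomorphism is an automorphism with the given inverse. -/
theorem nagata_automorphism_of_p (F : Type*) [Field F] [CharZero F]
    (p : MvPolynomial (Fin 2) F) (φ : MvPolynomial (Fin 3) F)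
    (hφ : φ = aeval ![X 0 * X 2 + X 1 ^ 2, X 2] p) :
    Function.Bijective
      (aeval (R := F) ![X 0 - 2 * X 1 * φ - X 2 * φ ^ 2, X 1 + X 2 * φ, X 2]) ∧
    (aeval (R := F) ![X 0 - 2 * X 1 * φ - X 2 * φ ^ 2, X 1 + X 2 * φ, X 2]).comp
        (aeval (R := F) ![X 0 + 2 * X 1 * φ - X 2 * φ ^ 2, X 1 - X 2 * φ, X 2]) =
      AlgHom.id F (MvPolynomial (Fin 3) F) ∧
    (aeval (R := F) ![X 0 + 2 * X 1 * φ - X 2 * φ ^ 2, X 1 - X 2 * φ, X 2]).comp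
        (aeval (R := F) ![X 0 - 2 * X 1 * φ - X 2 * φ ^ 2, X 1 + X 2 * φ, X 2]) =
      AlgHom.id F (MvPolynomial (Fin 3) F) := by
  set σ := aeval (R := F) ![X 0 - 2 * X 1 * φ - X 2 * φ ^ 2, X 1 + X 2 * φ, X 2] with hσ
  set τ := aeval (R := F) ![X 0 + 2 * X 1 * φ - X 2 * φ ^ 2, X 1 - X 2 * φ, X 2] with hτ
  have hσ0 : σ (X 0) = X 0 - 2 * X 1 * φ - X 2 * φ ^ 2 := by simp [hσ]
  have hσ1 : σ (X 1) = X 1 + X 2 * φ := by simp [hσ]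
  have hσ2 : σ (X 2) = X 2 := by simp [hσ]
  have hτ0 : τ (X 0) = X 0 + 2 * X 1 * φ - X 2 * φ ^ 2 := by simp [hτ]
  have hτ1 : τ (X 1) = X 1 - X 2 * φ := by simp [hτ]
  have hτ2 : τ (X 2) = X 2 := by simp [hτ]
  have key : ∀ (f : MvPolynomial (Fin 3) F →ₐ[F] MvPolynomial (Fin 3) F),
      f (X 0 * X 2 + X 1 ^ 2) = X 0 * X 2 + X 1 ^ 2 → f (X 2) = X 2 → f φ = φ := by
    intro f h1 h2
    have hv : (fun i => f (![X 0 * X 2 + X 1 ^ 2, X 2] i)) = ![X 0 * X 2 + X 1 ^ 2, X 2] := by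
      funext i
      fin_cases i <;> simp [h1, h2]
    rw [hφ, ← AlgHom.comp_apply, MvPolynomial.comp_aeval, hv]
  have hσφ : σ φ = φ := by
    apply key
    · rw [map_add, map_mul, map_pow, hσ0, hσ1, hσ2]; ring
    · exact hσ2
  have hτφ : τ φ = τ φ := rfl
  have hτφ' : τ φ = φ := by
    apply key
    · rw [map_add, map_mul, map_pow, hτ0, hτ1, hτ2]; ring
    · exact hτ2
  have hστ : σ.comp τ = AlgHom.id F (MvPolynomial (Fin 3) F) := by
    have h0 : σ (τ (X 0)) = X 0 := by
      simp only [map_sub, map_add, map_mul, map_pow, map_ofNat, hσ0, hσ1, hσ2, hσφ, hτ0]; ring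
    have h1 : σ (τ (X 1)) = X 1 := by
      simp only [map_sub, map_mul, hσ1, hσ2, hσφ, hτ1]; ring
    have h2 : σ (τ (X 2)) = X 2 := by rw [hτ2, hσ2]
    apply MvPolynomial.algHom_ext
    intro i
    fin_cases i
    exacts [h0, h1, h2]
  have hτσ : τ.comp σ = AlgHom.id F (MvPolynomial (Fin 3) F) := by
    have h0 : τ (σ (X 0)) = X 0 := by
      simp only [map_sub, map_add, map_mul, map_pow, map_ofNat, hτ0, hτ1, hτ2, hτφ', hσ0]; ring
    have h1 : τ (σ (X 1)) = X 1 := by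
      simp only [map_add, map_mul, hτ1, hτ2, hτφ', hσ1]; ring
    have h2 : τ (σ (X 2)) = X 2 := by rw [hσ2, hτ2]
    apply MvPolynomial.algHom_ext
    intro i
    fin_cases i
    exacts [h0, h1, h2]
  refine ⟨⟨?_, ?_⟩, hστ, hτσ⟩
  · exact Function.LeftInverse.injective (g := τ) fun q => AlgHom.congr_fun hτσ q
  · exact Function.RightInverse.surjective (g := τ) fun q => AlgHom.congr_fun hστ q
end

section
/- Let F be a field of characteristic 0 and let φ ∈ F[x,y,z] be a homogeneous polynomial of degree n satisfying -2y·φ_x + z·φ_y = 0. Write φ = Σ_{k=0}^{n} φ^{n-k} z^k with each φ^{n-k} ∈ F[x,y] homogeneous of degree n-k. Then φⁿ = a·yⁿ and φ¹ = b·x for some constants a, b ∈ F, and 2y·(φ^{n-k-1})_x = (φ^{n-k})_y for all k = 0, 1, ..., n-2. -/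
/-! Write `ψ k = φ^{n-k}` for the coefficient of `z^k`. Comparing the coefficients of `z^j` in
`2y φ_x = z φ_y` gives `2y (ψ j)_x = (ψ (j-1))_y`, where the right side is `0` for `j = 0`.
For `j = 0` this says `(ψ 0)_x = 0`. For `j = n` the left side vanishes because `ψ n` is a
constant, so `(ψ (n-1))_y = 0`. In characteristic zero, a binary form whose derivative in one
variable vanishes is a constant multiple of a power of the other variable. -/

open MvPolynomial

namespace MvPolynomial

section PDeriv

variable {σ R : Type*} [CommSemiring R] [NoZeroDivisors R] [CharZero R]

theorem coeff_eq_zero_of_pderiv_eq_zero {i : σ} {p : MvPolynomial σ R} (h : pderiv i p = 0)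
    {m : σ →₀ ℕ} (hm : m i ≠ 0) : coeff m p = 0 := by
  classical
  obtain ⟨m', rfl⟩ : ∃ m', m = m' + Finsupp.single i 1 :=
    ⟨m - Finsupp.single i 1,
      (tsub_add_cancel_of_le (Finsupp.single_le_iff.mpr (by omega))).symm⟩
  have hcoeff := coeff_pderiv (i := i) p m'
  rw [h, coeff_zero] at hcoeff
  exact (mul_eq_zero.mp hcoeff.symm).resolve_right (Nat.cast_add_one_ne_zero _)

theorem IsHomogeneous.eq_C_mul_X_pow_of_pderiv_eq_zero {p : MvPolynomial (Fin 2) R} {d : ℕ}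
    {i j : Fin 2} (hij : i ≠ j) (hp : p.IsHomogeneous d) (h : pderiv i p = 0) :
    p = C (coeff (Finsupp.single j d) p) * X j ^ d := by
  ext m
  rw [coeff_C_mul, coeff_X_pow]
  split_ifs with hm
  · rw [hm, mul_one]
  rw [mul_zero]
  by_cases hmi : m i = 0
  · refine hp.coeff_eq_zero fun hdeg => hm ?_
    have hm_single : m = Finsupp.single j (m j) := by
      ext k
      rcases (by omega : k = i ∨ k = j) with rfl | rfl <;> simp [hmi, hij]
    rw [hm_single, Finsupp.degree_single] at hdeg
    rw [hm_single, hdeg]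
  · exact coeff_eq_zero_of_pderiv_eq_zero h hmi

end PDeriv

theorem IsHomogeneous.pderiv_eq_zero {σ R : Type*} [CommSemiring R] {p : MvPolynomial σ R}
    (hp : p.IsHomogeneous 0) (i : σ) : pderiv i p = 0 := by
  rw [totalDegree_eq_zero_iff_eq_C.mp ((totalDegree_zero_iff_isHomogeneous _).mpr hp), pderiv_C]

section LastVariable

variable {R : Type*} [CommSemiring R] {m : ℕ}

/-- The coefficient of `X (Fin.last m) ^ j` in `p`, as a polynomial in the other variables. -/
noncomputable def coeffLast (j : ℕ) (p : MvPolynomial (Fin (m + 1)) R) : MvPolynomial (Fin m) R :=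
  (aeval (Fin.snoc (fun i => Polynomial.C (X i)) Polynomial.X : Fin (m + 1) → _) p).coeff j

theorem aeval_snoc_rename_castSucc (a : MvPolynomial (Fin m) R) :
    aeval (Fin.snoc (fun i => Polynomial.C (X i)) Polynomial.X : Fin (m + 1) → _)
      (rename Fin.castSucc a) = Polynomial.C a := by
  have hcomp : (Fin.snoc (fun i => Polynomial.C (X i)) Polynomial.X ∘ Fin.castSucc :
      Fin m → Polynomial (MvPolynomial (Fin m) R)) = fun i => Polynomial.C (X i) := by
    funext i
    simp
  rw [aeval_rename, hcomp]
  induction a using MvPolynomial.induction_on with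
  | C r => simp [Polynomial.C_eq_algebraMap]
  | add p q hp hq => simp [hp, hq]
  | mul_X p i hp => simp [hp]

theorem coeffLast_rename_castSucc_mul (j : ℕ) (a : MvPolynomial (Fin m) R)
    (p : MvPolynomial (Fin (m + 1)) R) :
    coeffLast j (rename Fin.castSucc a * p) = a * coeffLast j p := by
  rw [coeffLast, map_mul, aeval_snoc_rename_castSucc, Polynomial.coeff_C_mul, coeffLast]

theorem coeffLast_zero_X_last_mul (p : MvPolynomial (Fin (m + 1)) R) :
    coeffLast 0 (X (Fin.last m) * p) = 0 := by
  simp [coeffLast]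

theorem coeffLast_succ_X_last_mul (j : ℕ) (p : MvPolynomial (Fin (m + 1)) R) :
    coeffLast (j + 1) (X (Fin.last m) * p) = coeffLast j p := by
  simp [coeffLast]

theorem coeffLast_sum_rename_castSucc_mul_X_last_pow {N j : ℕ} (hj : j < N)
    (q : ℕ → MvPolynomial (Fin m) R) :
    coeffLast j (∑ k ∈ Finset.range N, rename Fin.castSucc (q k) * X (Fin.last m) ^ k) =
      q j := by
  simp [coeffLast, aeval_snoc_rename_castSucc, hj]

theorem pderiv_castSucc_sum_rename_castSucc_mul_X_last_pow (i : Fin m)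
    (q : ℕ → MvPolynomial (Fin m) R) (s : Finset ℕ) :
    pderiv i.castSucc (∑ k ∈ s, rename Fin.castSucc (q k) * X (Fin.last m) ^ k) =
      ∑ k ∈ s, rename Fin.castSucc (pderiv i (q k)) * X (Fin.last m) ^ k := by
  simp [pderiv_rename (Fin.castSucc_injective _), mul_comm]

theorem coeff_relations_of_rename_mul_sum_eq_X_last_mul_sum {N : ℕ} (a : MvPolynomial (Fin m) R)
    (q r : ℕ → MvPolynomial (Fin m) R)
    (h : rename Fin.castSucc a *
        ∑ k ∈ Finset.range N, rename Fin.castSucc (q k) * X (Fin.last m) ^ k =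
      X (Fin.last m) * ∑ k ∈ Finset.range N, rename Fin.castSucc (r k) * X (Fin.last m) ^ k)
    (hN : 0 < N) :
    a * q 0 = 0 ∧ ∀ j, j + 1 < N → a * q (j + 1) = r j := by
  refine ⟨?_, fun j hj => ?_⟩
  · have h₀ := congrArg (coeffLast 0) h
    rwa [coeffLast_rename_castSucc_mul, coeffLast_zero_X_last_mul,
      coeffLast_sum_rename_castSucc_mul_X_last_pow hN] at h₀
  · have hj' := congrArg (coeffLast (j + 1)) h
    rwa [coeffLast_rename_castSucc_mul, coeffLast_succ_X_last_mul,
      coeffLast_sum_rename_castSucc_mul_X_last_pow hj,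
      coeffLast_sum_rename_castSucc_mul_X_last_pow (by omega)] at hj'

end LastVariable

end MvPolynomial

theorem coefficients_of_homogeneous_solution_general (F : Type*) [Field F] [CharZero F]
    (n : ℕ) (hn : 1 ≤ n) (φ : MvPolynomial (Fin 3) F)
    (ψ : ℕ → MvPolynomial (Fin 2) F)
    (hψ : ∀ k, (ψ k).IsHomogeneous (n - k))
    (hdec : φ = ∑ k ∈ Finset.range (n + 1), rename Fin.castSucc (ψ k) * X 2 ^ k)
    (hpde : -(2 * X 1 * pderiv 0 φ) + X 2 * pderiv 1 φ = 0) :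
    (∃ a : F, ψ 0 = C a * X 1 ^ n) ∧
    (∃ b : F, ψ (n - 1) = C b * X 0) ∧
    (∀ k : ℕ, k + 2 ≤ n → 2 * X 1 * pderiv 0 (ψ (k + 1)) = pderiv 1 (ψ k)) := by
  have hexpand : rename Fin.castSucc (2 * X 1) *
        ∑ k ∈ Finset.range (n + 1), rename Fin.castSucc (pderiv 0 (ψ k)) * X (Fin.last 2) ^ k =
      X (Fin.last 2) * ∑ k ∈ Finset.range (n + 1),
        rename Fin.castSucc (pderiv 1 (ψ k)) * X (Fin.last 2) ^ k := by
    rw [← pderiv_castSucc_sum_rename_castSucc_mul_X_last_pow,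
      ← pderiv_castSucc_sum_rename_castSucc_mul_X_last_pow, map_mul, map_ofNat, rename_X]
    subst hdec
    exact neg_add_eq_zero.mp hpde
  obtain ⟨hlow, hstep⟩ :=
    coeff_relations_of_rename_mul_sum_eq_X_last_mul_sum _ _ _ hexpand n.succ_pos
  have h2y : (2 * X 1 : MvPolynomial (Fin 2) F) ≠ 0 := mul_ne_zero two_ne_zero (X_ne_zero 1)
  refine ⟨?_, ?_, fun k hk => hstep k (by omega)⟩
  · have hψ₀ : (ψ 0).IsHomogeneous n := by simpa using hψ 0
    exact ⟨_, hψ₀.eq_C_mul_X_pow_of_pderiv_eq_zero (i := 0) (by decide)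
      ((mul_eq_zero.mp hlow).resolve_left h2y)⟩
  · have hy := hstep (n - 1) (by omega)
    rw [Nat.sub_add_cancel hn, (by simpa using hψ n : (ψ n).IsHomogeneous 0).pderiv_eq_zero,
      mul_zero] at hy
    have hlinear : (ψ (n - 1)).IsHomogeneous 1 := by simpa [Nat.sub_sub_self hn] using hψ (n - 1)
    have hx := hlinear.eq_C_mul_X_pow_of_pderiv_eq_zero (i := 1) (j := 0) (by decide) hy.symm
    exact ⟨_, by rwa [pow_one] at hx⟩

/-- For a homogeneous solution φ = Σ_k ψ_k(x,y) z^k of -2y φ_x + z φ_y = 0 of degree n,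
with ψ_k homogeneous of degree n-k, one has ψ_0 = a yⁿ, ψ_{n-1} = b x, and
2y (ψ_{k+1})_x = (ψ_k)_y for 0 ≤ k ≤ n-2. -/
theorem coefficients_of_homogeneous_solution (F : Type*) [Field F] [CharZero F]
    (n : ℕ) (hn : 1 ≤ n) (φ : MvPolynomial (Fin 3) F)
    (ψ : ℕ → MvPolynomial (Fin 2) F)
    (hhom : φ.IsHomogeneous n)
    (hψ : ∀ k, (ψ k).IsHomogeneous (n - k))
    (hdec : φ = ∑ k ∈ Finset.range (n + 1), rename Fin.castSucc (ψ k) * X 2 ^ k)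
    (hpde : -(2 * X 1 * pderiv 0 φ) + X 2 * pderiv 1 φ = 0) :
    (∃ a : F, ψ 0 = C a * X 1 ^ n) ∧
    (∃ b : F, ψ (n - 1) = C b * X 0) ∧
    (∀ k : ℕ, k + 2 ≤ n → 2 * X 1 * pderiv 0 (ψ (k + 1)) = pderiv 1 (ψ k)) :=
  coefficients_of_homogeneous_solution_general F n hn φ ψ hψ hdec hpde
end

section
/- Let F be a field of characteristic 0 and let φ ∈ F[x,y,z] be a homogeneous polynomial of even degree 2n satisfying -2y·φ_x + z·φ_y = 0. Then there exist a ∈ F and a homogeneous polynomial ψ ∈ F[x,y,z] of degree 2n-1 with -2y·ψ_x + z·ψ_y = 0 such that φ = a·(xz + y²)ⁿ + z·ψ. -/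
/-!
The derivation `D φ = -2y φ_x + z φ_y` kills `z` and the quadric `q = xz + y²`.
Modulo `z`, a solution `φ` satisfies `2y φ_x ≡ 0`, so in characteristic 0 every monomial
of `φ` not divisible by `z` is free of `x`; by homogeneity `φ ≡ a y²ⁿ ≡ a qⁿ (mod z)`.
Writing `φ - a qⁿ = zψ`, the identity `D(zψ) = z Dψ` gives `Dψ = 0`.
-/

open MvPolynomial

namespace MvPolynomial

variable {σ R : Type*} [CommRing R]

theorem X_dvd_iff_coeff_eq_zero {i : σ} {p : MvPolynomial σ R} :
    X i ∣ p ↔ ∀ m : σ →₀ ℕ, m i = 0 → coeff m p = 0 := by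
  rw [X_dvd_iff_modMonomial_eq_zero, MvPolynomial.ext_iff]
  refine forall_congr' fun m => ?_
  by_cases hm : m i = 0
  · rw [coeff_modMonomial_of_not_le _ (by simpa [Finsupp.single_le_iff] using hm)]
    simp [hm]
  · have hle : Finsupp.single i 1 ≤ m := by
      simpa [Finsupp.single_le_iff, Nat.one_le_iff_ne_zero] using hm
    rw [coeff_modMonomial_of_le _ hle]
    simp [hm]

theorem IsHomogeneous.of_X_mul {i : σ} {p : MvPolynomial σ R} {n : ℕ}
    (h : (X i * p).IsHomogeneous n) : p.IsHomogeneous (n - 1) := by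
  intro d hd
  have hdeg := h (show coeff (Finsupp.single i 1 + d) (X i * p) ≠ 0 by rwa [coeff_X_mul])
  rw [map_add, Finsupp.weight_single, Pi.one_apply, smul_eq_mul, mul_one] at hdeg
  omega

theorem coeff_eq_zero_of_X_dvd_pderiv [IsDomain R] [CharZero R] {i k : σ} {p : MvPolynomial σ R}
    (h : X k ∣ pderiv i p) {m : σ →₀ ℕ} (hk : m k = 0) (hi : m i ≠ 0) :
    coeff m p = 0 := by
  have hm : m - Finsupp.single i 1 + Finsupp.single i 1 = m :=
    tsub_add_cancel_of_le (by simpa [Finsupp.single_le_iff, Nat.one_le_iff_ne_zero] using hi)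
  have hcoeff := X_dvd_iff_coeff_eq_zero.mp h (m - Finsupp.single i 1) (by simp [hk])
  rw [coeff_pderiv, hm, mul_eq_zero] at hcoeff
  exact hcoeff.resolve_right (Nat.cast_add_one_ne_zero _)

end MvPolynomial

/-- The operator `φ ↦ -2y φ_x + z φ_y`, with `x, y, z = X 0, X 1, X 2`. -/
noncomputable def pdeDerivation (R : Type*) [CommRing R] :
    Derivation R (MvPolynomial (Fin 3) R) (MvPolynomial (Fin 3) R) :=
  -((2 * X 1 : MvPolynomial (Fin 3) R) • pderiv 0) + (X 2 : MvPolynomial (Fin 3) R) • pderiv 1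

section pdeDerivation

variable {R : Type*} [CommRing R]

theorem pdeDerivation_apply (p : MvPolynomial (Fin 3) R) :
    pdeDerivation R p = -(2 * X 1 * pderiv 0 p) + X 2 * pderiv 1 p :=
  rfl

theorem pdeDerivation_X_two : pdeDerivation R (X 2) = 0 := by
  simp [pdeDerivation_apply, pderiv_X]

theorem pdeDerivation_quadric : pdeDerivation R (X 0 * X 2 + X 1 ^ 2) = 0 := by
  have hx : pderiv 0 (X 0 * X 2 + X 1 ^ 2 : MvPolynomial (Fin 3) R) = X 2 := by simp [pderiv_X]
  have hy : pderiv 1 (X 0 * X 2 + X 1 ^ 2 : MvPolynomial (Fin 3) R) = 2 * X 1 := by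
    simp [pderiv_X]
  rw [pdeDerivation_apply, hx, hy]
  ring

theorem pdeDerivation_X_two_mul (p : MvPolynomial (Fin 3) R) :
    pdeDerivation R (X 2 * p) = X 2 * pdeDerivation R p := by
  simp [Derivation.leibniz, pdeDerivation_X_two]

theorem pdeDerivation_C_mul_quadric_pow (a : R) (n : ℕ) :
    pdeDerivation R (C a * (X 0 * X 2 + X 1 ^ 2) ^ n) = 0 := by
  simp [C_mul', Derivation.leibniz_pow, pdeDerivation_quadric]

theorem X_two_dvd_pderiv_zero_of_pdeDerivation_eq_zero [IsDomain R] [CharZero R]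
    {p : MvPolynomial (Fin 3) R} (hp : pdeDerivation R p = 0) : X 2 ∣ pderiv 0 p := by
  rw [pdeDerivation_apply] at hp
  have h : X 2 ∣ C 2 * X 1 * pderiv 0 p :=
    ⟨pderiv 1 p, by simp only [map_ofNat]; linear_combination -hp⟩
  have hC : ¬X 2 ∣ (C 2 : MvPolynomial (Fin 3) R) := by
    rw [C_apply, X_dvd_monomial]
    simp
  have hX : ¬X 2 ∣ (X 1 : MvPolynomial (Fin 3) R) := by simp
  exact (X_prime.dvd_or_dvd h).resolve_left fun h' => (X_prime.dvd_or_dvd h').elim hC hX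

theorem X_two_dvd_sub_of_pdeDerivation_eq_zero [IsDomain R] [CharZero R]
    {p : MvPolynomial (Fin 3) R} {d : ℕ} (hhom : p.IsHomogeneous d)
    (hp : pdeDerivation R p = 0) :
    X 2 ∣ p - C (coeff (Finsupp.single 1 d) p) * X 1 ^ d := by
  rw [X_dvd_iff_coeff_eq_zero]
  intro m h2
  rw [coeff_sub, coeff_C_mul, X_pow_eq_monomial, coeff_monomial]
  by_cases hm : Finsupp.single 1 d = m
  · simp [hm]
  rw [if_neg hm, mul_zero, sub_zero]
  by_cases h0 : m 0 = 0
  · have hm1 : m = Finsupp.single 1 (m 1) := by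
      ext j
      fin_cases j <;> simp [h0, h2]
    refine hhom.coeff_eq_zero fun hdeg => hm ?_
    rw [hm1, Finsupp.degree_single] at hdeg
    rw [hm1, hdeg]
  · exact coeff_eq_zero_of_X_dvd_pderiv (X_two_dvd_pderiv_zero_of_pdeDerivation_eq_zero hp) h2 h0

end pdeDerivation

theorem isHomogeneous_quadric (R : Type*) [CommRing R] :
    (X 0 * X 2 + X 1 ^ 2 : MvPolynomial (Fin 3) R).IsHomogeneous 2 :=
  ((isHomogeneous_X R 0).mul (isHomogeneous_X R 2)).add ((isHomogeneous_X R 1).pow 2)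

theorem X_two_dvd_quadric_pow_sub {R : Type*} [CommRing R] (n : ℕ) :
    X 2 ∣ (X 0 * X 2 + X 1 ^ 2 : MvPolynomial (Fin 3) R) ^ n - X 1 ^ (2 * n) := by
  rw [pow_mul]
  exact (Dvd.intro (X 0) (by ring)).trans (sub_dvd_pow_sub_pow _ _ n)

/-- A homogeneous solution of -2y φ_x + z φ_y = 0 of even degree 2n has the form
a (xz+y²)ⁿ + z ψ, where ψ is a homogeneous solution of degree 2n-1. -/
theorem even_degree_solution (F : Type*) [Field F] [CharZero F]
    (n : ℕ) (φ : MvPolynomial (Fin 3) F)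
    (hhom : φ.IsHomogeneous (2 * n))
    (hpde : -(2 * X 1 * pderiv 0 φ) + X 2 * pderiv 1 φ = 0) :
    ∃ (a : F) (ψ : MvPolynomial (Fin 3) F),
      ψ.IsHomogeneous (2 * n - 1) ∧
      -(2 * X 1 * pderiv 0 ψ) + X 2 * pderiv 1 ψ = 0 ∧
      φ = C a * (X 0 * X 2 + X 1 ^ 2) ^ n + X 2 * ψ := by
  rw [← pdeDerivation_apply] at hpde
  set a := coeff (Finsupp.single 1 (2 * n)) φ
  obtain ⟨ψ, hψ⟩ : X 2 ∣ φ - C a * (X 0 * X 2 + X 1 ^ 2) ^ n := by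
    convert dvd_sub (X_two_dvd_sub_of_pdeDerivation_eq_zero hhom hpde)
      ((X_two_dvd_quadric_pow_sub n).mul_left (C a)) using 1
    ring
  have hφ : φ = C a * (X 0 * X 2 + X 1 ^ 2) ^ n + X 2 * ψ := by
    rw [← hψ, add_sub_cancel]
  refine ⟨a, ψ, ?_, ?_, hφ⟩
  · exact (hψ ▸ hhom.sub (((isHomogeneous_quadric F).pow n).C_mul a)).of_X_mul
  · rw [← pdeDerivation_apply]
    rw [hφ, map_add, pdeDerivation_C_mul_quadric_pow, zero_add, pdeDerivation_X_two_mul] at hpde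
    exact (mul_eq_zero.mp hpde).resolve_left (X_ne_zero 2)
end

section
/- Let F be a field of characteristic 0 and p ∈ F[t₁,t₂]. Set φ = p(xz+y², z) ∈ F[x,y,z] and give F[t₁,t₂] the weights v = (2,1), with d_v(p) the maximal value of 2k₁ + k₂ over (k₁,k₂) in the support of p. Then deg(φ) = d_v(p). -/
open MvPolynomial

section Aux

variable {F : Type*} [Field F]

private lemma sum_fin2 (v : Fin 2 →₀ ℕ) : (v.sum fun _ e => e) = v 0 + v 1 := by
  rw [Finsupp.sum_fintype _ _ (fun _ => rfl), Fin.sum_univ_two]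

private lemma sum_fin3 (v : Fin 3 →₀ ℕ) : (v.sum fun _ e => e) = v 0 + v 1 + v 2 := by
  rw [Finsupp.sum_fintype _ _ (fun _ => rfl), Fin.sum_univ_three]

private lemma upper (p : MvPolynomial (Fin 2) F) :
    (aeval ![X 0 * X 2 + X 1 ^ 2, X 2] p : MvPolynomial (Fin 3) F).totalDegree
      ≤ p.support.sup (fun k => 2 * k 0 + k 1) := by
  conv_lhs => rw [p.as_sum, map_sum]
  apply totalDegree_finsetSum_le
  intro v hv
  refine le_trans ?_ (Finset.le_sup hv)
  rw [aeval_monomial, Finsupp.prod_pow, Fin.prod_univ_two]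
  simp only [Matrix.cons_val_zero, Matrix.cons_val_one, Matrix.head_cons]
  have hA : (X 0 * X 2 + X 1 ^ 2 : MvPolynomial (Fin 3) F).totalDegree ≤ 2 := by
    refine (totalDegree_add _ _).trans (max_le ?_ ?_)
    · exact (totalDegree_mul _ _).trans (by simp [totalDegree_X])
    · exact (totalDegree_pow _ _).trans (by simp [totalDegree_X])
  have h1 : (algebraMap F (MvPolynomial (Fin 3) F) (coeff v p)).totalDegree = 0 := by
    rw [algebraMap_eq]; exact totalDegree_C _
  refine (totalDegree_mul _ _).trans ?_
  rw [h1, zero_add]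
  refine (totalDegree_mul _ _).trans ?_
  have h2 := (totalDegree_pow (X 0 * X 2 + X 1 ^ 2 : MvPolynomial (Fin 3) F) (v 0)).trans
    (Nat.mul_le_mul_left _ hA)
  have h3 : ((X 2 : MvPolynomial (Fin 3) F) ^ (v 1)).totalDegree ≤ v 1 := by
    simp [totalDegree_X_pow]
  omega

private lemma psi_le (r : MvPolynomial (Fin 3) F) :
    (aeval ![(X 0 : MvPolynomial (Fin 2) F), 0, X 1] r).totalDegree ≤ r.totalDegree := by
  conv_lhs => rw [r.as_sum, map_sum]
  apply totalDegree_finsetSum_le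
  intro v hv
  refine le_trans ?_ (le_totalDegree hv)
  rw [aeval_monomial, Finsupp.prod_pow, Fin.prod_univ_three, sum_fin3]
  simp only [Matrix.cons_val_zero, Matrix.cons_val_one, Matrix.head_cons,
    Matrix.cons_val_two, Matrix.tail_cons]
  have h1 : (algebraMap F (MvPolynomial (Fin 2) F) (coeff v r)).totalDegree = 0 := by
    rw [algebraMap_eq]; exact totalDegree_C _
  refine (totalDegree_mul _ _).trans ?_
  rw [h1, zero_add]
  refine (totalDegree_mul _ _).trans ?_
  have h2 : ((X 0 : MvPolynomial (Fin 2) F) ^ v 0).totalDegree ≤ v 0 := by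
    simp [totalDegree_X_pow]
  have h4 : ((X 1 : MvPolynomial (Fin 2) F) ^ v 2).totalDegree ≤ v 2 := by
    simp [totalDegree_X_pow]
  have h3 : ((0 : MvPolynomial (Fin 2) F) ^ v 1).totalDegree ≤ v 1 := by
    refine (totalDegree_pow _ _).trans ?_
    simp [totalDegree_zero]
  have h5 := totalDegree_mul ((X 0 : MvPolynomial (Fin 2) F) ^ v 0)
    ((0 : MvPolynomial (Fin 2) F) ^ v 1)
  omega

private lemma aeval_mono (v : Fin 2 →₀ ℕ) (a : F) :
    (aeval ![X 0 * X 1, X 1] (monomial v a) : MvPolynomial (Fin 2) F)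
      = monomial (Finsupp.single 0 (v 0) + Finsupp.single 1 (v 0 + v 1)) a := by
  have e0 : ((Finsupp.single (0 : Fin 2) (v 0) + Finsupp.single 1 (v 0 + v 1) :
      Fin 2 →₀ ℕ)) 0 = v 0 := by simp
  have e1 : ((Finsupp.single (0 : Fin 2) (v 0) + Finsupp.single 1 (v 0 + v 1) :
      Fin 2 →₀ ℕ)) 1 = v 0 + v 1 := by simp
  rw [aeval_monomial, monomial_eq, Finsupp.prod_pow, Finsupp.prod_pow,
    Fin.prod_univ_two, Fin.prod_univ_two, e0, e1]
  simp only [Matrix.cons_val_zero, Matrix.cons_val_one, Matrix.head_cons, algebraMap_eq]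
  ring

private lemma minj {v k : Fin 2 →₀ ℕ}
    (h : Finsupp.single 0 (v 0) + Finsupp.single 1 (v 0 + v 1)
       = Finsupp.single (0 : Fin 2) (k 0) + Finsupp.single 1 (k 0 + k 1)) : v = k := by
  have h0 := DFunLike.congr_fun h 0
  have h1 := DFunLike.congr_fun h 1
  simp only [Finsupp.add_apply, Finsupp.single_apply] at h0 h1
  norm_num at h0 h1
  have hall : ∀ i : Fin 2, v i = k i := by
    rw [Fin.forall_fin_two]
    omega
  ext i
  exact hall i

end Aux

/-- deg p(xz+y², z) equals the (2,1)-weighted degree of p. -/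
theorem totalDegree_eq_weighted_degree (F : Type*) [Field F] [CharZero F]
    (p : MvPolynomial (Fin 2) F) (φ : MvPolynomial (Fin 3) F)
    (hφ : φ = aeval ![X 0 * X 2 + X 1 ^ 2, X 2] p) :
    φ.totalDegree = p.support.sup (fun k => 2 * k 0 + k 1) := by
  by_cases hp : p = 0
  · simp [hφ, hp]
  obtain ⟨k, hk, hkd⟩ := Finset.exists_mem_eq_sup p.support
    (support_nonempty.mpr hp) (fun k => 2 * k 0 + k 1)
  refine le_antisymm (hφ ▸ upper p) ?_
  rw [hkd]
  set ψ : MvPolynomial (Fin 3) F →ₐ[F] MvPolynomial (Fin 2) F :=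
    aeval ![(X 0 : MvPolynomial (Fin 2) F), 0, X 1] with hψ
  have hψφ : ψ φ = aeval ![X 0 * X 1, X 1] p := by
    rw [hφ, comp_aeval_apply]
    have : (fun i => ψ (![X 0 * X 2 + X 1 ^ 2, X 2] i)) = ![X 0 * X 1, X 1] := by
      funext i
      fin_cases i <;> simp [hψ]
    rw [this]
  have hq : coeff (Finsupp.single 0 (k 0) + Finsupp.single 1 (k 0 + k 1))
      (aeval ![X 0 * X 1, X 1] p : MvPolynomial (Fin 2) F) = coeff k p := by
    conv_lhs => rw [p.as_sum, map_sum]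
    rw [coeff_sum, Finset.sum_eq_single k]
    · rw [aeval_mono, coeff_monomial, if_pos rfl]
    · intro v hv hne
      rw [aeval_mono, coeff_monomial, if_neg (fun h => hne (minj h))]
    · intro h; exact absurd hk h
  have hm : Finsupp.single (0 : Fin 2) (k 0) + Finsupp.single 1 (k 0 + k 1)
      ∈ (aeval ![X 0 * X 1, X 1] p : MvPolynomial (Fin 2) F).support := by
    rw [mem_support_iff, hq]
    exact mem_support_iff.mp hk
  have h1 := le_totalDegree hm
  have h2 : ((Finsupp.single (0 : Fin 2) (k 0) + Finsupp.single 1 (k 0 + k 1)).sum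
      fun _ e => e) = k 0 + (k 0 + k 1) := by
    rw [sum_fin2]
    simp [Finsupp.single_apply]
  rw [h2] at h1
  calc 2 * k 0 + k 1 = k 0 + (k 0 + k 1) := by ring
    _ ≤ (aeval ![X 0 * X 1, X 1] p : MvPolynomial (Fin 2) F).totalDegree := h1
    _ = (ψ φ).totalDegree := by rw [hψφ]
    _ ≤ φ.totalDegree := psi_le φ
end

section
/- Let F be a field of characteristic 0, p ∈ F[t₁,t₂] nonzero, and φ = p(xz+y², z) ∈ F[x,y,z]. Let p^v denote the sum of terms a_k t₁^{k₁}t₂^{k₂} of p with 2k₁ + k₂ maximal (the weighted-highest component for weights (2,1)). Then the highest-degree homogeneous component of φ equals p^v(xz+y², z). -/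
open MvPolynomial

lemma aeval_monomial_eq {F : Type*} [Field F] (k : Fin 2 →₀ ℕ) (c : F) :
    aeval ![X 0 * X 2 + X 1 ^ 2, X 2] (monomial k c) =
      C c * (X 0 * X 2 + X 1 ^ 2 : MvPolynomial (Fin 3) F) ^ k 0
        * (X 2 : MvPolynomial (Fin 3) F) ^ k 1 := by
  rw [aeval_monomial, Finsupp.prod_fintype _ _ (fun i => pow_zero _), Fin.prod_univ_two]
  simp [algebraMap_eq, mul_assoc]

lemma image_isHomogeneous {F : Type*} [Field F] (a b : ℕ) (c : F) :
    (C c * (X 0 * X 2 + X 1 ^ 2 : MvPolynomial (Fin 3) F) ^ a * X 2 ^ b).IsHomogeneous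
      (2 * a + b) := by
  have h1 : (X 0 * X 2 + X 1 ^ 2 : MvPolynomial (Fin 3) F).IsHomogeneous 2 := by
    have := ((isHomogeneous_X F (0 : Fin 3)).mul (isHomogeneous_X F 2)).add
      ((isHomogeneous_X F 1).pow 2)
    simpa using this
  have h2 : ((X 0 * X 2 + X 1 ^ 2 : MvPolynomial (Fin 3) F) ^ a).IsHomogeneous (2 * a) := by
    simpa [mul_comm] using h1.pow a
  have h3 : ((X 2 : MvPolynomial (Fin 3) F) ^ b).IsHomogeneous b := by
    simpa using (isHomogeneous_X F (2 : Fin 3)).pow b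
  exact (h2.C_mul c).mul h3

/-- The highest-degree homogeneous component of φ = p(xz+y², z) is p^v(xz+y², z),
where p^v is the (2,1)-weighted highest component of p. -/
theorem leading_component_eq (F : Type*) [Field F] [CharZero F]
    (p : MvPolynomial (Fin 2) F) (hp : p ≠ 0) (φ : MvPolynomial (Fin 3) F)
    (hφ : φ = aeval ![X 0 * X 2 + X 1 ^ 2, X 2] p)
    (pv : MvPolynomial (Fin 2) F)
    (hpv : pv = ∑ k ∈ p.support.filter
        (fun k => 2 * k 0 + k 1 = p.support.sup (fun k => 2 * k 0 + k 1)),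
      monomial k (p.coeff k)) :
    homogeneousComponent φ.totalDegree φ = aeval ![X 0 * X 2 + X 1 ^ 2, X 2] pv := by
  classical
  set w : (Fin 2 →₀ ℕ) → ℕ := fun k => 2 * k 0 + k 1 with hw
  set d : ℕ := p.support.sup w with hd
  set A : Fin 2 → MvPolynomial (Fin 3) F := ![X 0 * X 2 + X 1 ^ 2, X 2] with hA
  have key : ∀ (k : Fin 2 →₀ ℕ) (c : F), (aeval A (monomial k c)).IsHomogeneous (w k) := by
    intro k c
    rw [hA, aeval_monomial_eq]
    exact image_isHomogeneous _ _ _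
  have hφsum : φ = ∑ k ∈ p.support, aeval A (monomial k (p.coeff k)) := by
    rw [hφ]
    conv_lhs => rw [← support_sum_monomial_coeff p]
    rw [map_sum]
  have hcomp : homogeneousComponent d φ = aeval A pv := by
    rw [hφsum, map_sum, hpv, map_sum, Finset.sum_filter]
    refine Finset.sum_congr rfl fun k hk => ?_
    rw [homogeneousComponent_of_mem (key k (p.coeff k))]
    simp only [hw]
    by_cases h : 2 * k 0 + k 1 = d
    · simp [h]
    · simp [h, Ne.symm h]
  have hne : aeval A pv ≠ 0 := by
    intro h0
    obtain ⟨k, hk, hkd⟩ := Finset.exists_mem_eq_sup p.support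
      (support_nonempty.mpr hp) w
    rw [hpv, map_sum] at h0
    have h1 := congrArg (aeval (![Polynomial.X, 0, 1] : Fin 3 → Polynomial F)) h0
    rw [map_sum, map_zero] at h1
    have hBterm : ∀ (k : Fin 2 →₀ ℕ) (c : F),
        aeval ![Polynomial.X, 0, 1] (aeval A (monomial k c)) =
          Polynomial.C c * Polynomial.X ^ (k 0) := by
      intro k c
      rw [hA, aeval_monomial_eq]
      simp [Polynomial.algebraMap_eq]
    rw [Finset.sum_congr rfl (fun k _ => hBterm k (p.coeff k))] at h1
    have h2 := congrArg (fun q => Polynomial.coeff q (k 0)) h1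
    simp only [Polynomial.finset_sum_coeff, Polynomial.coeff_zero,
      Polynomial.coeff_C_mul, Polynomial.coeff_X_pow] at h2
    rw [Finset.sum_eq_single k] at h2
    · simp at h2
      exact (mem_support_iff.mp hk) h2
    · intro k' hk' hne
      have hk'w : w k' = d := (Finset.mem_filter.mp hk').2
      have : k' 0 ≠ k 0 := by
        intro heq
        apply hne
        ext i
        have h01 : k' 1 = k 1 := by
          have e1 : 2 * k' 0 + k' 1 = 2 * k 0 + k 1 := by
            have h1' : w k' = w k := hk'w.trans (hd.trans hkd)
            simpa [hw] using h1'
          omega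
        fin_cases i <;> simp [heq, h01]
      simp [Ne.symm this]
    · intro hk0
      exfalso
      apply hk0
      refine Finset.mem_filter.mpr ⟨hk, ?_⟩
      simpa [hw] using (hd.trans hkd).symm
  have hle : φ.totalDegree ≤ d := by
    rw [hφsum]
    refine le_trans (totalDegree_finset_sum _ _) (Finset.sup_le fun k hk => ?_)
    exact le_trans ((key k (p.coeff k)).totalDegree_le) (Finset.le_sup (f := w) hk)
  have hge : d ≤ φ.totalDegree := by
    by_contra h
    push_neg at h
    exact hne (hcomp ▸ homogeneousComponent_eq_zero d φ h)
  rw [le_antisymm hle hge]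
  exact hcomp
end

section
/- Let F be a field of characteristic 0. The support of φ = p(xz+y², z) for p = Σ a_k t₁^{k₁}t₂^{k₂} ∈ F[t₁,t₂] equals the set of triples (k₁-n, 2n, k₁+k₂-n) where (k₁,k₂) ranges over the support of p and 0 ≤ n ≤ k₁. -/
open MvPolynomial Finset

noncomputable def Eexp (a b n : ℕ) : Fin 3 →₀ ℕ :=
  Finsupp.single 0 n + Finsupp.single 1 (2 * (a - n)) + Finsupp.single 2 (n + b)

lemma Eexp_apply0 (a b n : ℕ) : Eexp a b n 0 = n := by
  simp [Eexp, Finsupp.single_apply]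

lemma Eexp_apply1 (a b n : ℕ) : Eexp a b n 1 = 2 * (a - n) := by
  simp [Eexp, Finsupp.single_apply]

lemma Eexp_apply2 (a b n : ℕ) : Eexp a b n 2 = n + b := by
  simp [Eexp, Finsupp.single_apply]

lemma term_eq (F : Type*) [Field F] (a b n : ℕ) (c : F) :
    C c * ((X 0 * X 2) ^ n * (X 1 ^ 2) ^ (a - n) *
      ((a.choose n : ℕ) : MvPolynomial (Fin 3) F) * X 2 ^ b) =
    monomial (Eexp a b n) (c * (a.choose n : F)) := by
  have hcast : ((a.choose n : ℕ) : MvPolynomial (Fin 3) F) = C ((a.choose n : ℕ) : F) := by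
    simp
  have h1 : (X 0 * X 2 : MvPolynomial (Fin 3) F) ^ n
      = monomial (Finsupp.single 0 n + Finsupp.single 2 n) (1 : F) := by
    rw [mul_pow, X_pow_eq_monomial, X_pow_eq_monomial, monomial_mul, one_mul]
  have h2 : ((X 1 : MvPolynomial (Fin 3) F) ^ 2) ^ (a - n)
      = monomial (Finsupp.single 1 (2 * (a - n))) (1 : F) := by
    rw [← pow_mul, X_pow_eq_monomial]
  rw [h1, h2, hcast, X_pow_eq_monomial, C_apply, C_apply]
  simp only [monomial_mul]
  refine (monomial_eq_monomial_iff _ _ _ _).mpr (Or.inl ⟨?_, by ring⟩)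
  ext i
  fin_cases i <;>
    simp [Eexp, Finsupp.single_apply, Finsupp.mul_apply, Finsupp.sub_apply]

lemma phi_rep (F : Type*) [Field F] (p : MvPolynomial (Fin 2) F) :
    aeval ![X 0 * X 2 + X 1 ^ 2, X 2] p =
      ∑ k ∈ p.support, ∑ n ∈ Finset.range (k 0 + 1),
        monomial (Eexp (k 0) (k 1) n) (coeff k p * ((k 0).choose n : F)) := by
  conv_lhs => rw [p.as_sum]
  rw [map_sum]
  refine Finset.sum_congr rfl fun k _ => ?_
  rw [aeval_monomial, Finsupp.prod_pow, Fin.prod_univ_two]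
  rw [show (![X 0 * X 2 + X 1 ^ 2, X 2] : Fin 2 → MvPolynomial (Fin 3) F) 0
        = X 0 * X 2 + X 1 ^ 2 from rfl,
      show (![X 0 * X 2 + X 1 ^ 2, X 2] : Fin 2 → MvPolynomial (Fin 3) F) 1
        = X 2 from rfl, add_pow]
  rw [Finset.sum_mul, Finset.mul_sum, algebraMap_eq]
  exact Finset.sum_congr rfl fun n _ => term_eq F (k 0) (k 1) n (coeff k p)

/-- The support of φ = p(xz+y², z) consists of the exponents (k₁-n, 2n, k₁+k₂-n)
with (k₁,k₂) in the support of p and 0 ≤ n ≤ k₁. -/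
theorem support_of_phi (F : Type*) [Field F] [CharZero F]
    (p : MvPolynomial (Fin 2) F) (φ : MvPolynomial (Fin 3) F)
    (hφ : φ = aeval ![X 0 * X 2 + X 1 ^ 2, X 2] p) :
    ∀ m : Fin 3 →₀ ℕ, m ∈ φ.support ↔
      ∃ k ∈ p.support, ∃ n : ℕ, n ≤ k 0 ∧
        m 0 = k 0 - n ∧ m 1 = 2 * n ∧ m 2 = k 0 + k 1 - n := by
  intro m
  have hrep := phi_rep F p
  rw [hφ] at *
  have hcoeff : coeff m (aeval ![X 0 * X 2 + X 1 ^ 2, X 2] p) =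
      ∑ k ∈ p.support, ∑ n ∈ Finset.range (k 0 + 1),
        if Eexp (k 0) (k 1) n = m then coeff k p * ((k 0).choose n : F) else 0 := by
    rw [hrep, coeff_sum]
    refine Finset.sum_congr rfl fun k _ => ?_
    rw [coeff_sum]
    exact Finset.sum_congr rfl fun n _ => coeff_monomial m _ _
  rw [mem_support_iff, hcoeff]
  constructor
  · intro hne
    obtain ⟨k, hk, hk2⟩ := Finset.exists_ne_zero_of_sum_ne_zero hne
    obtain ⟨n, hn, hn2⟩ := Finset.exists_ne_zero_of_sum_ne_zero hk2
    rw [Finset.mem_range] at hn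
    have hE : Eexp (k 0) (k 1) n = m := by
      by_contra h; rw [if_neg h] at hn2; exact hn2 rfl
    have h0 : m 0 = n := by rw [← hE, Eexp_apply0]
    have h1 : m 1 = 2 * (k 0 - n) := by rw [← hE, Eexp_apply1]
    have h2 : m 2 = n + k 1 := by rw [← hE, Eexp_apply2]
    exact ⟨k, hk, k 0 - n, by omega, by omega, h1, by omega⟩
  · rintro ⟨k, hk, n, hn, h0, h1, h2⟩
    have key : (∑ k ∈ p.support, ∑ n' ∈ Finset.range (k 0 + 1),
        if Eexp (k 0) (k 1) n' = m then coeff k p * ((k 0).choose n' : F) else 0)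
        = coeff k p * ((k 0).choose (k 0 - n) : F) := by
      rw [Finset.sum_eq_single_of_mem k hk]
      · rw [Finset.sum_eq_single_of_mem (k 0 - n) (Finset.mem_range.mpr (by omega))]
        · rw [if_pos]
          ext i
          fin_cases i
          · show Eexp (k 0) (k 1) (k 0 - n) 0 = m 0
            rw [Eexp_apply0]; omega
          · show Eexp (k 0) (k 1) (k 0 - n) 1 = m 1
            rw [Eexp_apply1]; omega
          · show Eexp (k 0) (k 1) (k 0 - n) 2 = m 2
            rw [Eexp_apply2]; omega
        · intro n' _ hne
          rw [if_neg]
          intro hE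
          have := congrArg (fun f => f 0) hE
          simp only [Eexp_apply0] at this
          omega
      · intro k' _ hne
        refine Finset.sum_eq_zero fun n' hn' => ?_
        rw [Finset.mem_range] at hn'
        rw [if_neg]
        intro hE
        have e0 := congrArg (fun f => f 0) hE
        have e1 := congrArg (fun f => f 1) hE
        have e2 := congrArg (fun f => f 2) hE
        simp only [Eexp_apply0, Eexp_apply1, Eexp_apply2] at e0 e1 e2
        apply hne
        ext i
        fin_cases i
        · show k' 0 = k 0; omega
        · show k' 1 = k 1; omega
    rw [key]
    exact mul_ne_zero (mem_support_iff.mp hk)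
      (Nat.cast_ne_zero.mpr (Nat.choose_pos (by omega)).ne')
end

section
/- Let F be a field of characteristic 0, φ ∈ F[x,y,z] with highest-degree homogeneous component φ̄ of positive degree, and let f = x - 2yφ - zφ², g = y + zφ, h = z. Then the highest-degree homogeneous components satisfy f̄ = -z·φ̄², ḡ = z·φ̄, h̄ = z. -/
/-!
In a domain the top homogeneous component is multiplicative, and adding a polynomial of smaller
total degree does not change it. Since `deg φ > 0`, the term `X 2 * φ ^ 2` of degree
`2 deg φ + 1` dominates the rest of `f`, and `X 2 * φ` of degree `deg φ + 1` dominates `X 1`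
in `g`.
-/

open MvPolynomial

namespace MvPolynomial

variable {σ R : Type*}

section CommSemiring

variable [CommSemiring R] {p q : MvPolynomial σ R}

theorem homogeneousComponent_mul_of_totalDegree_le {m n : ℕ} (hp : p.totalDegree ≤ m)
    (hq : q.totalDegree ≤ n) :
    homogeneousComponent (m + n) (p * q) =
      homogeneousComponent m p * homogeneousComponent n q := by
  classical
  ext d
  rw [coeff_homogeneousComponent, coeff_mul, coeff_mul]
  split_ifs with hd
  · refine Finset.sum_congr rfl fun x hx => ?_
    have hdeg : x.1.degree + x.2.degree = m + n := by
      rw [← map_add, Finset.HasAntidiagonal.mem_antidiagonal.1 hx, hd]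
    simp only [coeff_homogeneousComponent]
    by_cases h1 : x.1.degree = m
    · rw [if_pos h1, if_pos (by omega)]
    · rw [if_neg h1, zero_mul]
      -- either `x.1` or `x.2` exceeds the degree bound of its factor
      rcases lt_or_gt_of_ne h1 with h1 | h1
      · rw [coeff_eq_zero_of_totalDegree_lt (hq.trans_lt (by omega : n < x.2.degree)), mul_zero]
      · rw [coeff_eq_zero_of_totalDegree_lt (hp.trans_lt h1), zero_mul]
  · rw [← coeff_mul]
    exact ((homogeneousComponent_isHomogeneous m p).mul
      (homogeneousComponent_isHomogeneous n q)).coeff_eq_zero hd |>.symm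

theorem homogeneousComponent_totalDegree_add_of_lt (h : q.totalDegree < p.totalDegree) :
    homogeneousComponent (p + q).totalDegree (p + q) = homogeneousComponent p.totalDegree p := by
  rw [totalDegree_add_eq_left_of_totalDegree_lt h, map_add, homogeneousComponent_eq_zero _ _ h,
    add_zero]

theorem homogeneousComponent_totalDegree_X [Nontrivial R] (i : σ) :
    homogeneousComponent (X i : MvPolynomial σ R).totalDegree (X i : MvPolynomial σ R) = X i := by
  rw [totalDegree_X, homogeneousComponent_eq_self (isHomogeneous_X R i)]

end CommSemiring

section CommRing

variable [CommRing R]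

theorem homogeneousComponent_totalDegree_neg (p : MvPolynomial σ R) :
    homogeneousComponent (-p).totalDegree (-p) = -homogeneousComponent p.totalDegree p := by
  rw [totalDegree_neg, map_neg]

variable [IsDomain R]

theorem homogeneousComponent_totalDegree_mul (p q : MvPolynomial σ R) :
    homogeneousComponent (p * q).totalDegree (p * q) =
      homogeneousComponent p.totalDegree p * homogeneousComponent q.totalDegree q := by
  rcases eq_or_ne p 0 with rfl | hp
  · simp
  rcases eq_or_ne q 0 with rfl | hq
  · simp
  rw [totalDegree_mul_of_isDomain hp hq, homogeneousComponent_mul_of_totalDegree_le le_rfl le_rfl]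

theorem homogeneousComponent_totalDegree_pow (p : MvPolynomial σ R) (n : ℕ) :
    homogeneousComponent (p ^ n).totalDegree (p ^ n) =
      homogeneousComponent p.totalDegree p ^ n := by
  induction n with
  | zero => simp
  | succ n ih => rw [pow_succ, homogeneousComponent_totalDegree_mul, ih, pow_succ]

theorem totalDegree_pow_of_isDomain (p : MvPolynomial σ R) (n : ℕ) :
    (p ^ n).totalDegree = n * p.totalDegree := by
  rcases eq_or_ne p 0 with rfl | hp
  · cases n <;> simp
  induction n with
  | zero => simp
  | succ n ih => rw [pow_succ, totalDegree_mul_of_isDomain (pow_ne_zero n hp) hp, ih, Nat.succ_mul]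

end CommRing

end MvPolynomial

theorem leading_components_of_nagata_general (F : Type*) [Field F]
    (φ f g h : MvPolynomial (Fin 3) F)
    (hdeg : 0 < φ.totalDegree)
    (hf : f = X 0 - 2 * X 1 * φ - X 2 * φ ^ 2)
    (hg : g = X 1 + X 2 * φ)
    (hh : h = X 2) :
    homogeneousComponent f.totalDegree f =
      -(X 2 * (homogeneousComponent φ.totalDegree φ) ^ 2) ∧
    homogeneousComponent g.totalDegree g = X 2 * homogeneousComponent φ.totalDegree φ ∧
    homogeneousComponent h.totalDegree h = X 2 := by
  have hφ : φ ≠ 0 := by rintro rfl; simp at hdeg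
  have hXφ : (X 2 * φ).totalDegree = 1 + φ.totalDegree := by
    rw [totalDegree_mul_of_isDomain (X_ne_zero 2) hφ, totalDegree_X]
  have hXφ2 : (-(X 2 * φ ^ 2)).totalDegree = 1 + 2 * φ.totalDegree := by
    rw [totalDegree_neg, totalDegree_mul_of_isDomain (X_ne_zero 2) (pow_ne_zero 2 hφ),
      totalDegree_X, totalDegree_pow_of_isDomain]
  have hX1φ : (2 * X 1 * φ).totalDegree ≤ 1 + φ.totalDegree := by
    rw [mul_assoc, two_mul, ← totalDegree_X (R := F) (1 : Fin 3)]
    exact (totalDegree_add _ _).trans ((max_self _).trans_le (totalDegree_mul _ _))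
  have hrest : (X 0 - 2 * X 1 * φ).totalDegree < 1 + 2 * φ.totalDegree := by
    have := totalDegree_sub (X 0 : MvPolynomial (Fin 3) F) (2 * X 1 * φ)
    rw [totalDegree_X] at this
    omega
  refine ⟨?_, ?_, ?_⟩
  · rw [show f = -(X 2 * φ ^ 2) + (X 0 - 2 * X 1 * φ) by rw [hf]; ring,
      homogeneousComponent_totalDegree_add_of_lt (hXφ2 ▸ hrest),
      homogeneousComponent_totalDegree_neg, homogeneousComponent_totalDegree_mul,
      homogeneousComponent_totalDegree_pow, homogeneousComponent_totalDegree_X]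
  · rw [hg, add_comm,
      homogeneousComponent_totalDegree_add_of_lt (by rw [hXφ, totalDegree_X]; omega),
      homogeneousComponent_totalDegree_mul, homogeneousComponent_totalDegree_X]
  · rw [hh, homogeneousComponent_totalDegree_X]

/-- If deg φ > 0, the leading homogeneous components of the Nagata triple are
f̄ = -z φ̄², ḡ = z φ̄, h̄ = z. -/
theorem leading_components_of_nagata (F : Type*) [Field F] [CharZero F]
    (φ f g h : MvPolynomial (Fin 3) F)
    (hdeg : 0 < φ.totalDegree)
    (hf : f = X 0 - 2 * X 1 * φ - X 2 * φ ^ 2)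
    (hg : g = X 1 + X 2 * φ)
    (hh : h = X 2) :
    homogeneousComponent f.totalDegree f =
      -(X 2 * (homogeneousComponent φ.totalDegree φ) ^ 2) ∧
    homogeneousComponent g.totalDegree g = X 2 * homogeneousComponent φ.totalDegree φ ∧
    homogeneousComponent h.totalDegree h = X 2 :=
  leading_components_of_nagata_general F φ f g h hdeg hf hg hh
end

section
/- Let φ = (xz+y²)ⁿ ∈ F[x,y,z] with n ≥ 1 and F a field of characteristic 0. Then the endomorphism of F[x,y,z] sending x ↦ x - 2y(xz+y²)ⁿ - z(xz+y²)^{2n}, y ↦ y + z(xz+y²)ⁿ, z ↦ z is an automorphism. -/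
/-!
The substitutions `σ_t : x ↦ x - 2ty - t²z, y ↦ y + tz, z ↦ z` all fix `Δ = xz + y²`. Hence, as long
as `t` is a polynomial in `Δ`, they also fix `t` and compose additively, `σ_s ∘ σ_t = σ_{s+t}`; so
`σ_t` has inverse `σ_{-t}`. The theorem is the case `t = Δⁿ`.
-/

open MvPolynomial

namespace MvPolynomial

noncomputable section

variable {R : Type*} [CommRing R]

def nagataForm : MvPolynomial (Fin 3) R := X 0 * X 2 + X 1 ^ 2

def nagataMap (t : MvPolynomial (Fin 3) R) : Fin 3 → MvPolynomial (Fin 3) R :=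
  ![X 0 - 2 * X 1 * t - X 2 * t ^ 2, X 1 + X 2 * t, X 2]

section nagataMap

variable (t : MvPolynomial (Fin 3) R)

@[simp] theorem nagataMap_apply_zero : nagataMap t 0 = X 0 - 2 * X 1 * t - X 2 * t ^ 2 := rfl

@[simp] theorem nagataMap_apply_one : nagataMap t 1 = X 1 + X 2 * t := rfl

@[simp] theorem nagataMap_apply_two : nagataMap t 2 = X 2 := rfl

end nagataMap

theorem aeval_nagataMap_nagataForm (t : MvPolynomial (Fin 3) R) :
    aeval (nagataMap t) (nagataForm : MvPolynomial (Fin 3) R) = nagataForm := by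
  simp only [nagataForm, map_add, map_mul, map_pow, aeval_X, nagataMap_apply_zero,
    nagataMap_apply_one, nagataMap_apply_two]
  ring

theorem aeval_nagataMap_comp_aeval_nagataMap {s t : MvPolynomial (Fin 3) R}
    (hst : aeval (nagataMap s) t = t) :
    (aeval (nagataMap s)).comp (aeval (nagataMap t)) = aeval (nagataMap (s + t)) := by
  refine algHom_ext fun i => ?_
  fin_cases i <;>
    simp only [AlgHom.comp_apply, aeval_X, Fin.zero_eta, Fin.mk_one, Fin.reduceFinMk,
      nagataMap_apply_zero, nagataMap_apply_one, nagataMap_apply_two, map_sub, map_add, map_mul,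
      map_pow, map_ofNat, hst] <;>
    ring

theorem aeval_nagataMap_zero : aeval (nagataMap (0 : MvPolynomial (Fin 3) R)) = AlgHom.id R _ := by
  refine algHom_ext fun i => ?_
  fin_cases i <;> simp [nagataMap]

theorem aeval_nagataMap_comp_aeval_nagataMap_neg {t : MvPolynomial (Fin 3) R}
    (ht : aeval (nagataMap t) t = t) :
    (aeval (nagataMap t)).comp (aeval (nagataMap (-t))) = AlgHom.id R _ := by
  have hfix : aeval (nagataMap t) (-t) = -t := by rw [map_neg, ht]
  rw [aeval_nagataMap_comp_aeval_nagataMap hfix, add_neg_cancel, aeval_nagataMap_zero]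

def nagataEquiv (t : MvPolynomial (Fin 3) R) (ht : ∀ s, aeval (nagataMap s) t = t) :
    MvPolynomial (Fin 3) R ≃ₐ[R] MvPolynomial (Fin 3) R :=
  AlgEquiv.ofAlgHom (aeval (nagataMap t)) (aeval (nagataMap (-t)))
    (aeval_nagataMap_comp_aeval_nagataMap_neg (ht t))
    (by
      simpa only [neg_neg] using
        aeval_nagataMap_comp_aeval_nagataMap_neg (t := -t) (by rw [map_neg, ht]))

theorem coe_nagataEquiv (t : MvPolynomial (Fin 3) R) (ht : ∀ s, aeval (nagataMap s) t = t) :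
    ⇑(nagataEquiv t ht) = aeval (nagataMap t) :=
  rfl

end

end MvPolynomial

theorem nagata_power_automorphism_general (F : Type*) [Field F]
    (n : ℕ) :
    Function.Bijective
      (aeval (R := F)
        ![X 0 - 2 * X 1 * (X 0 * X 2 + X 1 ^ 2) ^ n - X 2 * (X 0 * X 2 + X 1 ^ 2) ^ (2 * n),
          X 1 + X 2 * (X 0 * X 2 + X 1 ^ 2) ^ n,
          (X 2 : MvPolynomial (Fin 3) F)]) := by
  have hmap : ![X 0 - 2 * X 1 * (X 0 * X 2 + X 1 ^ 2) ^ n - X 2 * (X 0 * X 2 + X 1 ^ 2) ^ (2 * n),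
      X 1 + X 2 * (X 0 * X 2 + X 1 ^ 2) ^ n, (X 2 : MvPolynomial (Fin 3) F)] =
      nagataMap (nagataForm ^ n) := by
    simp only [nagataMap, nagataForm, pow_mul']
  have hfix (s : MvPolynomial (Fin 3) F) :
      aeval (nagataMap s) (nagataForm ^ n : MvPolynomial (Fin 3) F) = nagataForm ^ n := by
    rw [map_pow, aeval_nagataMap_nagataForm]
  rw [hmap, ← coe_nagataEquiv _ hfix]
  exact AlgEquiv.bijective _

/-- The Nagata endomorphism for φ = (xz+y²)ⁿ, n ≥ 1, is an automorphism. -/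
theorem nagata_power_automorphism (F : Type*) [Field F] [CharZero F]
    (n : ℕ) (hn : 1 ≤ n) :
    Function.Bijective
      (aeval (R := F)
        ![X 0 - 2 * X 1 * (X 0 * X 2 + X 1 ^ 2) ^ n - X 2 * (X 0 * X 2 + X 1 ^ 2) ^ (2 * n),
          X 1 + X 2 * (X 0 * X 2 + X 1 ^ 2) ^ n,
          (X 2 : MvPolynomial (Fin 3) F)]) :=
  nagata_power_automorphism_general F n
end
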